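/- Convergence of the plug-in derivative functional: let θ, θ̂ₙ be bounded measurable on compact 𝒳 with √n‖θ̂ₙ − θ‖_∞ ≤ C, sₙ → ∞ with sₙ/√n → 0, and let h be bounded measurable. Define Φ̂ₙ'(h) = ∫_{{|θ̂ₙ| ≥ 1/sₙ}} sgn(θ̂ₙ) h dx + ∫_{{|θ̂ₙ| < 1/sₙ}} |h| dx and Φ'_θ(h) = ∫_{{|θ|>0}} sgn(θ) h dx + ∫_{{θ=0}} |h| dx. Then |Φ̂ₙ'(h) − Φ'_θ(h)| ≤ (λ(M₁ₙ ∩ M₂^c) + λ(M₂ ∩ M₁ₙ^c))·‖h‖_∞ + ∫_{M₁ₙ∩M₂} |sgn(θ̂ₙ) − sgn(θ)|·|h| dx + ∫ over the corresponding symmetric-difference terms for the second integrals, and |Φ̂ₙ'(h) − Φ'_θ(h)| → 0 as n → ∞, where M₁ₙ = {|θ̂ₙ| > 1/sₙ}, M₂ = {|θ| > 0}. -/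

import Mathlib

/-!
On the set where `θ` stays away from zero, a uniformly close `θ̂ₙ` has the same sign as `θ` and
exceeds the threshold `1/sₙ`, because `‖θ̂ₙ - θ‖_∞ ≤ C/√n` is eventually smaller than `1/sₙ`.
Hence the two functionals can only differ on `{0 < |θ| < 2/sₙ}`, a family of sets decreasing to the
empty set as `sₙ → ∞`, whose measure therefore tends to zero.
-/

open MeasureTheory Filter Set
open scoped ENNReal Topology symmDiff

namespace Real

theorem measurable_sign : Measurable Real.sign :=
  Measurable.ite (measurableSet_lt measurable_id measurable_const) measurable_const
    (Measurable.ite (measurableSet_lt measurable_const measurable_id) measurable_const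
      measurable_const)

theorem abs_sign_mul_le (a b : ℝ) : |sign a * b| ≤ |b| := by
  rcases sign_apply_eq a with h | h | h <;> simp [h]

theorem sign_eq_sign_of_abs_sub_lt {a b : ℝ} (h : |a - b| < |a|) : sign b = sign a := by
  rcases lt_trichotomy a 0 with ha | rfl | ha
  · have hb : b < 0 := by cases abs_cases (a - b) <;> cases abs_cases a <;> linarith
    rw [sign_of_neg ha, sign_of_neg hb]
  · simp only [abs_zero] at h; linarith [abs_nonneg (0 - b)]
  · have hb : 0 < b := by cases abs_cases (a - b) <;> cases abs_cases a <;> linarith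
    rw [sign_of_pos ha, sign_of_pos hb]

end Real

theorem eventually_forall_lt_one_div_of_sqrt_mul_le {s : ℕ → ℝ} (hs : ∀ n, 0 < s n)
    (hsn : Tendsto (fun n : ℕ => s n / Real.sqrt n) atTop (𝓝 0)) (C : ℝ) :
    ∀ᶠ n : ℕ in atTop, ∀ x : ℝ, Real.sqrt n * x ≤ C → x < 1 / s n := by
  have hCs : ∀ᶠ n : ℕ in atTop, C * (s n / Real.sqrt n) < 1 :=
    (hsn.const_mul C).eventually_lt_const (by simp)
  filter_upwards [hCs, eventually_ge_atTop 1] with n hCs hn x hx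
  have hsqrt : 0 < Real.sqrt n := Real.sqrt_pos.2 (by exact_mod_cast hn)
  rw [lt_div_iff₀ (hs n)]
  calc x * s n ≤ C / Real.sqrt n * s n :=
        mul_le_mul_of_nonneg_right (by rw [le_div_iff₀ hsqrt]; linarith) (hs n).le
    _ = C * (s n / Real.sqrt n) := by ring
    _ < 1 := hCs

section SetIntegral

variable {α E : Type*} [MeasurableSpace α] {μ : Measure α}
  [NormedAddCommGroup E] [NormedSpace ℝ E]
  {A B : Set α} {f g : α → E} {M : ℝ}

theorem norm_setIntegral_sub_setIntegral_le (hA : MeasurableSet A) (hB : MeasurableSet B)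
    (hAμ : μ A ≠ ∞) (hBμ : μ B ≠ ∞) (hf : IntegrableOn f A μ) (hg : IntegrableOn g B μ)
    (hfM : ∀ y ∈ A, ‖f y‖ ≤ M) (hgM : ∀ y ∈ B, ‖g y‖ ≤ M) :
    ‖(∫ y in A, f y ∂μ) - ∫ y in B, g y ∂μ‖
      ≤ (μ.real (A \ B) + μ.real (B \ A)) * M + ∫ y in A ∩ B, ‖f y - g y‖ ∂μ := by
  have hfA := integral_inter_add_sdiff hB hf
  have hgB := integral_inter_add_sdiff hA hg
  rw [inter_comm B A] at hgB
  have hsub := integral_sub (hf.mono_set inter_subset_left) (hg.mono_set inter_subset_right)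
  have hfAB : ‖∫ y in A \ B, f y ∂μ‖ ≤ M * μ.real (A \ B) :=
    norm_setIntegral_le_of_norm_le_const ((measure_mono sdiff_subset).trans_lt hAμ.lt_top)
      fun y hy => hfM y hy.1
  have hgBA : ‖∫ y in B \ A, g y ∂μ‖ ≤ M * μ.real (B \ A) :=
    norm_setIntegral_le_of_norm_le_const ((measure_mono sdiff_subset).trans_lt hBμ.lt_top)
      fun y hy => hgM y hy.1
  have hfg := norm_integral_le_integral_norm (μ := μ.restrict (A ∩ B)) (fun y => f y - g y)
  calc ‖(∫ y in A, f y ∂μ) - ∫ y in B, g y ∂μ‖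
      = ‖(∫ y in A \ B, f y ∂μ) - (∫ y in B \ A, g y ∂μ) + ∫ y in A ∩ B, f y - g y ∂μ‖ := by
        rw [← hfA, ← hgB, hsub]; abel_nf
    _ ≤ ‖∫ y in A \ B, f y ∂μ‖ + ‖∫ y in B \ A, g y ∂μ‖ + ‖∫ y in A ∩ B, f y - g y ∂μ‖ :=
        norm_add_le_of_le (norm_sub_le _ _) le_rfl
    _ ≤ _ := by linarith

theorem norm_setIntegral_sub_setIntegral_le_measureReal_symmDiff (hA : MeasurableSet A)
    (hB : MeasurableSet B) (hAμ : μ A ≠ ∞) (hBμ : μ B ≠ ∞) (hf : IntegrableOn f (A ∪ B) μ)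
    (hfM : ∀ y ∈ A ∪ B, ‖f y‖ ≤ M) :
    ‖(∫ y in A, f y ∂μ) - ∫ y in B, f y ∂μ‖ ≤ μ.real (A ∆ B) * M := by
  have h := norm_setIntegral_sub_setIntegral_le hA hB hAμ hBμ (hf.mono_set subset_union_left)
    (hf.mono_set subset_union_right) (fun y hy => hfM y (.inl hy)) (fun y hy => hfM y (.inr hy))
  have hAB : μ (A \ B) ≠ ∞ := ne_top_of_le_ne_top hAμ (measure_mono sdiff_subset)
  have hBA : μ (B \ A) ≠ ∞ := ne_top_of_le_ne_top hBμ (measure_mono sdiff_subset)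
  simpa [Set.symmDiff_def, measureReal_union disjoint_sdiff_sdiff (hB.diff hA) hAB hBA] using h

end SetIntegral

section AbsIntegralDeriv

variable {α : Type*} [MeasurableSpace α] {μ : Measure α} {X : Set α} {θ φ h : α → ℝ} {r M : ℝ}

/-- The directional derivative of `θ ↦ ∫_X |θ| dμ` at `θ` in the direction `h`. -/
noncomputable def absIntegralDeriv (μ : Measure α) (X : Set α) (θ h : α → ℝ) : ℝ :=
  (∫ y in X ∩ {y | 0 < |θ y|}, Real.sign (θ y) * h y ∂μ) + ∫ y in X ∩ {y | θ y = 0}, |h y| ∂μ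

noncomputable def thresholdedAbsIntegralDeriv (μ : Measure α) (X : Set α) (r : ℝ)
    (φ h : α → ℝ) : ℝ :=
  (∫ y in X ∩ {y | r ≤ |φ y|}, Real.sign (φ y) * h y ∂μ) + ∫ y in X ∩ {y | |φ y| < r}, |h y| ∂μ

theorem integrableOn_sign_mul (hX : MeasurableSet X) (hXμ : μ X ≠ ∞) (hφ : Measurable φ)
    (hh : Measurable h) (hhM : ∀ y ∈ X, |h y| ≤ M) :
    IntegrableOn (fun y => Real.sign (φ y) * h y) X μ :=
  Measure.integrableOn_of_bounded hXμ ((Real.measurable_sign.comp hφ).mul hh).aestronglyMeasurable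
    ((ae_restrict_mem hX).mono fun y hy => (Real.abs_sign_mul_le _ _).trans (hhM y hy))

theorem abs_thresholdedAbsIntegralDeriv_sub_le (hX : MeasurableSet X) (hXμ : μ X ≠ ∞)
    (hφ : Measurable φ) (hθ : Measurable θ) (hh : Measurable h) (hhM : ∀ y ∈ X, |h y| ≤ M) :
    |thresholdedAbsIntegralDeriv μ X r φ h - absIntegralDeriv μ X θ h|
      ≤ (μ.real (X ∩ ({y | r ≤ |φ y|} \ {y | 0 < |θ y|}))
          + μ.real (X ∩ ({y | 0 < |θ y|} \ {y | r ≤ |φ y|}))) * M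
        + (∫ y in X ∩ {y | r ≤ |φ y|} ∩ {y | 0 < |θ y|},
            |Real.sign (φ y) - Real.sign (θ y)| * |h y| ∂μ)
        + μ.real (X ∩ (({y | |φ y| < r} \ {y | θ y = 0}) ∪
            ({y | θ y = 0} \ {y | |φ y| < r}))) * M := by
  have hS : MeasurableSet {y | r ≤ |φ y|} := measurableSet_le measurable_const hφ.abs
  have hT : MeasurableSet {y | 0 < |θ y|} := measurableSet_lt measurable_const hθ.abs
  have hD : MeasurableSet {y | |φ y| < r} := measurableSet_lt hφ.abs measurable_const
  have hE : MeasurableSet {y | θ y = 0} := hθ (measurableSet_singleton 0)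
  have hfinite : ∀ U, μ (X ∩ U) ≠ ∞ := fun U =>
    ne_top_of_le_ne_top hXμ (measure_mono inter_subset_left)
  have hsign : ∀ ψ : α → ℝ, ∀ y ∈ X, ‖Real.sign (ψ y) * h y‖ ≤ M :=
    fun ψ y hy => (Real.abs_sign_mul_le _ _).trans (hhM y hy)
  have habs : ∀ y ∈ X, ‖|h y|‖ ≤ M := fun y hy => (abs_abs (h y)).trans_le (hhM y hy)
  have hfirst := norm_setIntegral_sub_setIntegral_le (hX.inter hS) (hX.inter hT)
    (hfinite _) (hfinite _)
    ((integrableOn_sign_mul hX hXμ hφ hh hhM).mono_set inter_subset_left)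
    ((integrableOn_sign_mul hX hXμ hθ hh hhM).mono_set inter_subset_left)
    (fun y hy => hsign φ y hy.1) (fun y hy => hsign θ y hy.1)
  have hsecond := norm_setIntegral_sub_setIntegral_le_measureReal_symmDiff (f := fun y => |h y|)
    (hX.inter hD) (hX.inter hE) (hfinite _) (hfinite _)
    ((Measure.integrableOn_of_bounded hXμ hh.abs.aestronglyMeasurable
      ((ae_restrict_mem hX).mono habs)).mono_set (union_subset inter_subset_left inter_subset_left))
    (fun y hy => habs y (hy.elim (·.1) (·.1)))
  simp only [Real.norm_eq_abs, ← inter_sdiff_distrib_left, ← sub_mul, abs_mul] at hfirst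
  rw [← inter_symmDiff_distrib_left, Set.symmDiff_def, Real.norm_eq_abs] at hsecond
  rw [← inter_inter_distrib_left, ← inter_assoc] at hfirst
  unfold thresholdedAbsIntegralDeriv absIntegralDeriv
  calc _ ≤ |(∫ y in X ∩ {y | r ≤ |φ y|}, Real.sign (φ y) * h y ∂μ)
            - ∫ y in X ∩ {y | 0 < |θ y|}, Real.sign (θ y) * h y ∂μ|
          + |(∫ y in X ∩ {y | |φ y| < r}, |h y| ∂μ) - ∫ y in X ∩ {y | θ y = 0}, |h y| ∂μ| := by
        rw [add_sub_add_comm]; exact abs_add_le _ _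
    _ ≤ _ := by linarith

theorem abs_thresholdedAbsIntegralDeriv_sub_le_of_abs_sub_lt (hX : MeasurableSet X)
    (hXμ : μ X ≠ ∞) (hφ : Measurable φ) (hθ : Measurable θ) (hh : Measurable h) (hM : 0 ≤ M)
    (hhM : ∀ y ∈ X, |h y| ≤ M) (hclose : ∀ y ∈ X, |φ y - θ y| < r) :
    |thresholdedAbsIntegralDeriv μ X r φ h - absIntegralDeriv μ X θ h|
      ≤ 2 * M * μ.real (X ∩ {y | 0 < |θ y| ∧ |θ y| < 2 * r}) := by
  have hbound := abs_thresholdedAbsIntegralDeriv_sub_le (r := r) hX hXμ hφ hθ hh hhM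
  have hφ_lt : ∀ y ∈ X, θ y = 0 → |φ y| < r := fun y hy hθy => by
    simpa [hθy] using hclose y hy
  have hshell : ∀ y ∈ X, θ y ≠ 0 → |φ y| < r → y ∈ X ∩ {y | 0 < |θ y| ∧ |θ y| < 2 * r} :=
    fun y hy hθy hφy => ⟨hy, abs_pos.2 hθy, by
      linarith [abs_sub_abs_le_abs_sub (θ y) (φ y), abs_sub_comm (θ y) (φ y), hclose y hy]⟩
  have hSminusT : X ∩ ({y | r ≤ |φ y|} \ {y | 0 < |θ y|}) = ∅ := by
    refine eq_empty_of_forall_notMem ?_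
    rintro y ⟨hyX, hyS, hyT⟩
    exact (hφ_lt y hyX (by simpa using hyT)).not_ge hyS
  have hsign : ∫ y in X ∩ {y | r ≤ |φ y|} ∩ {y | 0 < |θ y|},
      |Real.sign (φ y) - Real.sign (θ y)| * |h y| ∂μ = 0 := by
    refine setIntegral_eq_zero_of_forall_eq_zero ?_
    rintro y ⟨⟨hyX, hyS⟩, -⟩
    rw [Real.sign_eq_sign_of_abs_sub_lt ((hclose y hyX).trans_le hyS), sub_self, abs_zero,
      zero_mul]
  have hTminusS : X ∩ ({y | 0 < |θ y|} \ {y | r ≤ |φ y|})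
      ⊆ X ∩ {y | 0 < |θ y| ∧ |θ y| < 2 * r} := fun y ⟨hyX, hyT, hyS⟩ =>
    hshell y hyX (abs_pos.1 hyT) (not_le.1 hyS)
  have hDE : X ∩ (({y | |φ y| < r} \ {y | θ y = 0}) ∪ ({y | θ y = 0} \ {y | |φ y| < r}))
      ⊆ X ∩ {y | 0 < |θ y| ∧ |θ y| < 2 * r} := by
    rintro y ⟨hyX, ⟨hyD, hyE⟩ | ⟨hyE, hyD⟩⟩
    · exact hshell y hyX hyE hyD
    · exact absurd (hφ_lt y hyX hyE) hyD
  have hKμ : μ (X ∩ {y | 0 < |θ y| ∧ |θ y| < 2 * r}) ≠ ∞ :=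
    ne_top_of_le_ne_top hXμ (measure_mono inter_subset_left)
  rw [hSminusT, hsign, measureReal_empty, zero_add, add_zero] at hbound
  calc _ ≤ _ := hbound
    _ ≤ μ.real (X ∩ {y | 0 < |θ y| ∧ |θ y| < 2 * r}) * M
        + μ.real (X ∩ {y | 0 < |θ y| ∧ |θ y| < 2 * r}) * M := by
      gcongr
    _ = _ := by ring

theorem tendsto_measure_inter_abs_pos_abs_lt (hX : MeasurableSet X) (hXμ : μ X ≠ ∞)
    (hθ : Measurable θ) :
    Tendsto (fun ε => μ (X ∩ {y | 0 < |θ y| ∧ |θ y| < ε})) (𝓝[>] 0) (𝓝 0) := by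
  have hlim := tendsto_measure_biInter_gt (μ := μ) (a := 0)
    (s := fun ε : ℝ => X ∩ {y | 0 < |θ y| ∧ |θ y| < ε})
    (fun _ _ => (hX.inter ((measurableSet_lt measurable_const hθ.abs).inter
      (measurableSet_lt hθ.abs measurable_const))).nullMeasurableSet)
    (fun _ _ _ hε _ hy => ⟨hy.1, hy.2.1, hy.2.2.trans_le hε⟩)
    ⟨1, one_pos, ne_top_of_le_ne_top hXμ (measure_mono inter_subset_left)⟩
  have hempty : ⋂ ε > (0 : ℝ), X ∩ {y | 0 < |θ y| ∧ |θ y| < ε} = ∅ := by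
    refine eq_empty_of_forall_notMem fun y hy => ?_
    simp only [mem_iInter, mem_inter_iff, mem_ofPred_eq] at hy
    exact lt_irrefl _ (hy _ (hy 1 one_pos).2.1).2.2
  rwa [hempty, measure_empty] at hlim

theorem tendsto_abs_thresholdedAbsIntegralDeriv_sub {ι : Type*} {l : Filter ι}
    {θhat : ι → α → ℝ} {r : ι → ℝ} (hX : MeasurableSet X) (hXμ : μ X ≠ ∞)
    (hθhat : ∀ i, Measurable (θhat i)) (hθ : Measurable θ) (hh : Measurable h) (hM : 0 ≤ M)
    (hhM : ∀ y ∈ X, |h y| ≤ M) (hr : ∀ i, 0 < r i) (hr0 : Tendsto r l (𝓝 0))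
    (hclose : ∀ᶠ i in l, ∀ y ∈ X, |θhat i y - θ y| < r i) :
    Tendsto (fun i => |thresholdedAbsIntegralDeriv μ X (r i) (θhat i) h - absIntegralDeriv μ X θ h|)
      l (𝓝 0) := by
  have h2r : Tendsto (fun i => 2 * r i) l (𝓝[>] 0) :=
    tendsto_nhdsWithin_iff.2 ⟨by simpa using hr0.const_mul 2,
      Eventually.of_forall fun i => mul_pos two_pos (hr i)⟩
  have hmeasure : Tendsto (fun i => μ.real (X ∩ {y | 0 < |θ y| ∧ |θ y| < 2 * r i})) l (𝓝 0) :=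
    (ENNReal.tendsto_toReal_zero_iff fun _ =>
      ne_top_of_le_ne_top hXμ (measure_mono inter_subset_left)).2
      ((tendsto_measure_inter_abs_pos_abs_lt hX hXμ hθ).comp h2r)
  refine squeeze_zero' (Eventually.of_forall fun _ => abs_nonneg _)
    (hclose.mono fun i hi => abs_thresholdedAbsIntegralDeriv_sub_le_of_abs_sub_lt hX hXμ
      (hθhat i) hθ hh hM hhM hi) ?_
  simpa using hmeasure.const_mul (2 * M)

end AbsIntegralDeriv

theorem plugin_derivative_tendsto_general
    {d : ℕ} (X : Set (Fin d → ℝ)) (hX : IsCompact X) (hXm : MeasurableSet X)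
    (θ : (Fin d → ℝ) → ℝ) (θhat : ℕ → (Fin d → ℝ) → ℝ)
    (hθm : Measurable θ) (hθhm : ∀ n, Measurable (θhat n))
    (h : (Fin d → ℝ) → ℝ) (hhm : Measurable h)
    (Mh : ℝ) (hMh : 0 ≤ Mh) (hhb : ∀ y ∈ X, |h y| ≤ Mh)
    (s : ℕ → ℝ) (hs : ∀ n, 0 < s n) (hsinf : Tendsto s atTop atTop)
    (hsn : Tendsto (fun n : ℕ => s n / Real.sqrt n) atTop (nhds 0))
    (C : ℝ)
    (hsup : ∀ n : ℕ, ∀ y ∈ X, Real.sqrt n * |θhat n y - θ y| ≤ C) :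
    (∀ n : ℕ,
      |((∫ y in X ∩ {y | 1 / s n ≤ |θhat n y|}, Real.sign (θhat n y) * h y) +
          ∫ y in X ∩ {y | |θhat n y| < 1 / s n}, |h y|) -
        ((∫ y in X ∩ {y | 0 < |θ y|}, Real.sign (θ y) * h y) +
          ∫ y in X ∩ {y | θ y = 0}, |h y|)|
      ≤ ((volume (X ∩ ({y | 1 / s n ≤ |θhat n y|} \ {y | 0 < |θ y|}))).toReal +
          (volume (X ∩ ({y | 0 < |θ y|} \ {y | 1 / s n ≤ |θhat n y|}))).toReal) * Mh
        + (∫ y in X ∩ {y | 1 / s n ≤ |θhat n y|} ∩ {y | 0 < |θ y|},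
            |Real.sign (θhat n y) - Real.sign (θ y)| * |h y|)
        + (volume (X ∩ (({y | |θhat n y| < 1 / s n} \ {y | θ y = 0}) ∪
            ({y | θ y = 0} \ {y | |θhat n y| < 1 / s n})))).toReal * Mh) ∧
    Tendsto
      (fun n : ℕ =>
        |((∫ y in X ∩ {y | 1 / s n ≤ |θhat n y|}, Real.sign (θhat n y) * h y) +
            ∫ y in X ∩ {y | |θhat n y| < 1 / s n}, |h y|) -
          ((∫ y in X ∩ {y | 0 < |θ y|}, Real.sign (θ y) * h y) +
            ∫ y in X ∩ {y | θ y = 0}, |h y|)|)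
      atTop (nhds 0) := by
  have hXμ : volume X ≠ ∞ := hX.measure_lt_top.ne
  refine ⟨fun n => abs_thresholdedAbsIntegralDeriv_sub_le hXm hXμ (hθhm n) hθm hhm hhb, ?_⟩
  have hclose : ∀ᶠ n in atTop, ∀ y ∈ X, |θhat n y - θ y| < 1 / s n := by
    filter_upwards [eventually_forall_lt_one_div_of_sqrt_mul_le hs hsn C] with n hn y hy
    exact hn _ (hsup n y hy)
  exact tendsto_abs_thresholdedAbsIntegralDeriv_sub hXm hXμ hθhm hθm hhm hMh hhb
    (fun n => one_div_pos.2 (hs n)) (hsinf.inv_tendsto_atTop.congr fun n => (one_div (s n)).symm)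
    hclose

/-- Convergence of the plug-in derivative functional: with
`Φ̂ₙ'(h) = ∫_{|θ̂ₙ| ≥ 1/sₙ} sgn(θ̂ₙ)h + ∫_{|θ̂ₙ| < 1/sₙ} |h|` and
`Φ'_θ(h) = ∫_{|θ|>0} sgn(θ)h + ∫_{θ=0} |h|`, one has the bound by the measures of
the set discrepancies and the sign-difference integral, and `|Φ̂ₙ'(h) − Φ'_θ(h)| → 0`. -/
theorem plugin_derivative_tendsto
    {d : ℕ} (X : Set (Fin d → ℝ)) (hX : IsCompact X) (hXm : MeasurableSet X)
    (θ : (Fin d → ℝ) → ℝ) (θhat : ℕ → (Fin d → ℝ) → ℝ)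
    (hθm : Measurable θ) (hθhm : ∀ n, Measurable (θhat n))
    (Mθ : ℝ) (hθb : ∀ y ∈ X, |θ y| ≤ Mθ)
    (h : (Fin d → ℝ) → ℝ) (hhm : Measurable h)
    (Mh : ℝ) (hMh : 0 ≤ Mh) (hhb : ∀ y ∈ X, |h y| ≤ Mh)
    (s : ℕ → ℝ) (hs : ∀ n, 0 < s n) (hsinf : Tendsto s atTop atTop)
    (hsn : Tendsto (fun n : ℕ => s n / Real.sqrt n) atTop (nhds 0))
    (C : ℝ) (hC : 0 < C)
    (hsup : ∀ n : ℕ, ∀ y ∈ X, Real.sqrt n * |θhat n y - θ y| ≤ C) :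
    (∀ n : ℕ,
      |((∫ y in X ∩ {y | 1 / s n ≤ |θhat n y|}, Real.sign (θhat n y) * h y) +
          ∫ y in X ∩ {y | |θhat n y| < 1 / s n}, |h y|) -
        ((∫ y in X ∩ {y | 0 < |θ y|}, Real.sign (θ y) * h y) +
          ∫ y in X ∩ {y | θ y = 0}, |h y|)|
      ≤ ((volume (X ∩ ({y | 1 / s n ≤ |θhat n y|} \ {y | 0 < |θ y|}))).toReal +
          (volume (X ∩ ({y | 0 < |θ y|} \ {y | 1 / s n ≤ |θhat n y|}))).toReal) * Mh
        + (∫ y in X ∩ {y | 1 / s n ≤ |θhat n y|} ∩ {y | 0 < |θ y|},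
            |Real.sign (θhat n y) - Real.sign (θ y)| * |h y|)
        + (volume (X ∩ (({y | |θhat n y| < 1 / s n} \ {y | θ y = 0}) ∪
            ({y | θ y = 0} \ {y | |θhat n y| < 1 / s n})))).toReal * Mh) ∧
    Tendsto
      (fun n : ℕ =>
        |((∫ y in X ∩ {y | 1 / s n ≤ |θhat n y|}, Real.sign (θhat n y) * h y) +
            ∫ y in X ∩ {y | |θhat n y| < 1 / s n}, |h y|) -
          ((∫ y in X ∩ {y | 0 < |θ y|}, Real.sign (θ y) * h y) +
            ∫ y in X ∩ {y | θ y = 0}, |h y|)|)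
      atTop (nhds 0) :=
  plugin_derivative_tendsto_general X hX hXm θ θhat hθm hθhm h hhm Mh hMh hhb s hs hsinf hsn C hsup
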